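/- arXiv:1906.07300 — 3 statements merged into one kernel-verified Lean document; each statement's English description precedes it below -/
import Mathlib

section
/- Let $(x_i)_{i \geq 1}$ be a square-summable real sequence with $x_i = c_1 \chi^i$ for some constants $c_1 \in \mathbb{R}$ and $|\chi| < 1$. If $(u_i)$ is any sequence with $u_i = 0$ for all $i > t+1$, then $\sum_{i=1}^\infty (u_i - x_i)^2 \geq \chi^{2(t+1)} \sum_{i=1}^\infty x_i^2$. -/
/-- Domino-argument estimate: if `x i = c₁ χ^i` (for `i ≥ 1`) is square-summable with
`|χ| < 1`, and `u` vanishes beyond index `t+1`, then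
`∑_{i≥1} (u_i - x_i)² ≥ χ^(2(t+1)) ∑_{i≥1} x_i²`. -/
theorem stmt_6 (x u : ℕ → ℝ) (c₁ χ : ℝ) (hχ : |χ| < 1)
    (hx : ∀ i : ℕ, 1 ≤ i → x i = c₁ * χ ^ i)
    (hsum : Summable fun i : ℕ => (x (i + 1)) ^ 2)
    (t : ℕ) (hu : ∀ i : ℕ, t + 1 < i → u i = 0) :
    χ ^ (2 * (t + 1)) * ∑' i : ℕ, (x (i + 1)) ^ 2 ≤
      ∑' i : ℕ, (u (i + 1) - x (i + 1)) ^ 2 := by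
  set f : ℕ → ℝ := fun i => (u (i + 1) - x (i + 1)) ^ 2 with hf
  have hzero : ∀ i : ℕ, f (i + (t + 1)) = (x (i + (t + 1) + 1)) ^ 2 := by
    intro i
    simp only [hf]
    rw [hu _ (by omega)]
    ring
  have hshift : Summable (fun i : ℕ => (x (i + (t + 1) + 1)) ^ 2) :=
    (summable_nat_add_iff (f := fun i : ℕ => (x (i + 1)) ^ 2) (t + 1)).mpr hsum
  have hsumf : Summable f :=
    (summable_nat_add_iff (f := f) (t + 1)).mp (hshift.congr fun i => (hzero i).symm)
  have key : χ ^ (2 * (t + 1)) * ∑' i : ℕ, (x (i + 1)) ^ 2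
      = ∑' i : ℕ, (x (i + (t + 1) + 1)) ^ 2 := by
    rw [← tsum_mul_left]
    apply tsum_congr
    intro i
    rw [hx (i + 1) (by omega), hx (i + (t + 1) + 1) (by omega)]
    ring
  rw [key]
  have htail := Summable.sum_add_tsum_nat_add (f := f) (t + 1) hsumf
  have hnn : 0 ≤ ∑ i ∈ Finset.range (t + 1), f i :=
    Finset.sum_nonneg fun i _ => sq_nonneg _
  have : ∑' i : ℕ, (x (i + (t + 1) + 1)) ^ 2 = ∑' i : ℕ, f (i + (t + 1)) :=
    tsum_congr fun i => (hzero i).symm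
  rw [this]
  linarith
end

section
/- Suppose $\mu_1, \mu_2, L_1, L_2 > 0$ and $\mu_{12}, L_{12} \geq 0$ satisfy $(\mu_1-\mu_2)^2 < 4\mu_{12}^2$, $(L_1-L_2)^2 < 4L_{12}^2$, and $\mu_1\mu_2 + \mu_{12}^2 \leq L_1 L_2 + L_{12}^2$. Then for the $4\times 4$ matrix $A$ with blocks $\mathrm{diag}(\mu_1, L_1)$, $\mathrm{diag}(\mu_{12}, L_{12})$, $-\mathrm{diag}(\mu_{12}, L_{12})$, $\mathrm{diag}(\mu_2, L_2)$ (in the $2\times 2$ block pattern of the paper), the ratio of the maximum to the minimum modulus of eigenvalues of $A$ equals $\sqrt{\frac{L_1 L_2 + L_{12}^2}{\mu_1\mu_2 + \mu_{12}^2}}$. -/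
/-!
The coordinates `{1, 3}` and `{2, 4}` are invariant, so `A` is the direct sum of the blocks
`[[μ₁, μ₁₂], [-μ₁₂, μ₂]]` and `[[L₁, L₁₂], [-L₁₂, L₂]]`, and its characteristic polynomial is
`(z² - (μ₁ + μ₂) z + m) (z² - (L₁ + L₂) z + l)` with `m = μ₁μ₂ + μ₁₂²`, `l = L₁L₂ + L₁₂²`.
The hypotheses on `(μ₁ - μ₂)²` and `(L₁ - L₂)²` say exactly that both quadratics have negative
discriminant, so their roots are complex-conjugate pairs of modulus `√m` and `√l`.
-/

open Polynomial Matrix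

theorem charpoly_of_interleaved_blocks {R : Type*} [CommRing R] (a b c d e f : R) :
    (!![a, 0, b, 0; 0, c, 0, d; -b, 0, e, 0; 0, -d, 0, f] : Matrix (Fin 4) (Fin 4) R).charpoly =
      (X ^ 2 - C (a + e) * X + C (a * e + b ^ 2)) * (X ^ 2 - C (c + f) * X + C (c * f + d ^ 2)) := by
  simp [Matrix.charpoly, Matrix.det_succ_row_zero, Fin.sum_univ_succ, charmatrix_apply,
    Fin.succAbove]
  ring

def rootNorms (p : ℂ[X]) : Set ℝ := {r | ∃ z : ℂ, p.IsRoot z ∧ r = ‖z‖}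

theorem rootNorms_mul (p q : ℂ[X]) : rootNorms (p * q) = rootNorms p ∪ rootNorms q := by
  ext r
  simp only [rootNorms, IsRoot, eval_mul, mul_eq_zero, or_and_right, exists_or, Set.mem_union,
    Set.mem_ofPred_eq]

theorem norm_eq_sqrt_of_quadratic_root {t d : ℝ} (hdisc : t ^ 2 < 4 * d) {z : ℂ}
    (hz : z ^ 2 - t * z + d = 0) : ‖z‖ = √d := by
  have hre := congrArg Complex.re hz
  have him := congrArg Complex.im hz
  simp only [pow_two, Complex.sub_re, Complex.add_re, Complex.mul_re, Complex.ofReal_re,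
    Complex.ofReal_im, Complex.sub_im, Complex.add_im, Complex.mul_im, Complex.zero_re,
    Complex.zero_im] at hre him
  have him' : z.im * (2 * z.re - t) = 0 := by linear_combination him
  have h2re : 2 * z.re = t := by
    rcases mul_eq_zero.1 him' with h | h
    · rw [h] at hre; nlinarith [sq_nonneg (2 * z.re - t)]
    · linarith
  rw [Complex.norm_def, Complex.normSq_apply]
  congr 1
  linear_combination -hre + z.re * h2re

theorem exists_quadratic_root {t d : ℝ} (hdisc : t ^ 2 < 4 * d) :
    ∃ z : ℂ, z ^ 2 - t * z + d = 0 := by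
  obtain ⟨s, hs⟩ : ∃ s : ℝ, s ^ 2 = d - t ^ 2 / 4 := ⟨_, Real.sq_sqrt (by linarith)⟩
  refine ⟨⟨t / 2, s⟩, Complex.ext ?_ ?_⟩
  · simp only [pow_two, Complex.sub_re, Complex.add_re, Complex.mul_re, Complex.ofReal_re,
      Complex.ofReal_im, Complex.zero_re]
    linear_combination (-1) * hs
  · simp only [pow_two, Complex.sub_im, Complex.add_im, Complex.mul_im, Complex.ofReal_re,
      Complex.ofReal_im, Complex.zero_im]
    ring

theorem rootNorms_quadratic {t d : ℝ} (hdisc : t ^ 2 < 4 * d) :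
    rootNorms (X ^ 2 - C (t : ℂ) * X + C (d : ℂ)) = {√d} := by
  have hroot (z : ℂ) : (X ^ 2 - C (t : ℂ) * X + C (d : ℂ)).IsRoot z ↔ z ^ 2 - t * z + d = 0 := by
    simp [IsRoot]
  ext r
  simp only [rootNorms, hroot, Set.mem_ofPred_eq, Set.mem_singleton_iff]
  constructor
  · rintro ⟨z, hz, rfl⟩
    exact norm_eq_sqrt_of_quadratic_root hdisc hz
  · rintro rfl
    obtain ⟨z, hz⟩ := exists_quadratic_root hdisc
    exact ⟨z, hz, (norm_eq_sqrt_of_quadratic_root hdisc hz).symm⟩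

theorem stmt_10_general (μ₁ μ₂ L₁ L₂ : ℝ) (μ₁₂ L₁₂ : ℝ)
    (hdμ : (μ₁ - μ₂) ^ 2 < 4 * μ₁₂ ^ 2) (hdL : (L₁ - L₂) ^ 2 < 4 * L₁₂ ^ 2)
    (hle : μ₁ * μ₂ + μ₁₂ ^ 2 ≤ L₁ * L₂ + L₁₂ ^ 2)
    (A : Matrix (Fin 4) (Fin 4) ℝ)
    (hA : A = !![μ₁, 0, μ₁₂, 0;
                 0, L₁, 0, L₁₂;
                 -μ₁₂, 0, μ₂, 0;
                 0, -L₁₂, 0, L₂]) :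
    sSup {r : ℝ | ∃ z : ℂ, (A.map (Complex.ofReal)).charpoly.IsRoot z ∧ r = ‖z‖} /
      sInf {r : ℝ | ∃ z : ℂ, (A.map (Complex.ofReal)).charpoly.IsRoot z ∧ r = ‖z‖} =
      Real.sqrt ((L₁ * L₂ + L₁₂ ^ 2) / (μ₁ * μ₂ + μ₁₂ ^ 2)) := by
  have hμ : (μ₁ + μ₂) ^ 2 < 4 * (μ₁ * μ₂ + μ₁₂ ^ 2) := by linarith
  have hL : (L₁ + L₂) ^ 2 < 4 * (L₁ * L₂ + L₁₂ ^ 2) := by linarith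
  have hnorms : rootNorms (A.map Complex.ofReal).charpoly =
      {√(μ₁ * μ₂ + μ₁₂ ^ 2), √(L₁ * L₂ + L₁₂ ^ 2)} := by
    rw [show A.map Complex.ofReal = A.map Complex.ofRealHom from rfl, charpoly_map, hA,
      charpoly_of_interleaved_blocks]
    simp only [Polynomial.map_mul, Polynomial.map_add, Polynomial.map_sub, Polynomial.map_pow,
      map_X, map_C, Complex.ofRealHom_eq_coe]
    rw [rootNorms_mul, rootNorms_quadratic hμ, rootNorms_quadratic hL, Set.singleton_union]
  change sSup (rootNorms _) / sInf (rootNorms _) = _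
  have hsqrt : √(μ₁ * μ₂ + μ₁₂ ^ 2) ≤ √(L₁ * L₂ + L₁₂ ^ 2) := Real.sqrt_le_sqrt hle
  rw [hnorms, csSup_pair, csInf_pair, max_eq_right hsqrt, min_eq_left hsqrt,
    Real.sqrt_div' _ (by nlinarith)]

/-- Under the conditions `(μ₁-μ₂)² < 4μ₁₂²`, `(L₁-L₂)² < 4L₁₂²`, and
`μ₁μ₂ + μ₁₂² ≤ L₁L₂ + L₁₂²`, the ratio of the maximum to the minimum modulus
of the (complex) eigenvalues of the 4×4 matrix `A` equals
`√((L₁L₂ + L₁₂²)/(μ₁μ₂ + μ₁₂²))`. -/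
theorem stmt_10 (μ₁ μ₂ L₁ L₂ : ℝ) (μ₁₂ L₁₂ : ℝ)
    (hμ₁ : 0 < μ₁) (hμ₂ : 0 < μ₂) (hL₁ : 0 < L₁) (hL₂ : 0 < L₂)
    (hμ₁₂ : 0 ≤ μ₁₂) (hL₁₂ : 0 ≤ L₁₂)
    (hdμ : (μ₁ - μ₂) ^ 2 < 4 * μ₁₂ ^ 2) (hdL : (L₁ - L₂) ^ 2 < 4 * L₁₂ ^ 2)
    (hle : μ₁ * μ₂ + μ₁₂ ^ 2 ≤ L₁ * L₂ + L₁₂ ^ 2)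
    (A : Matrix (Fin 4) (Fin 4) ℝ)
    (hA : A = !![μ₁, 0, μ₁₂, 0;
                 0, L₁, 0, L₁₂;
                 -μ₁₂, 0, μ₂, 0;
                 0, -L₁₂, 0, L₂]) :
    sSup {r : ℝ | ∃ z : ℂ, (A.map (Complex.ofReal)).charpoly.IsRoot z ∧ r = ‖z‖} /
      sInf {r : ℝ | ∃ z : ℂ, (A.map (Complex.ofReal)).charpoly.IsRoot z ∧ r = ‖z‖} =
      Real.sqrt ((L₁ * L₂ + L₁₂ ^ 2) / (μ₁ * μ₂ + μ₁₂ ^ 2)) :=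
  stmt_10_general μ₁ μ₂ L₁ L₂ μ₁₂ L₁₂ hdμ hdL hle A hA
end

section
/- Let $\mu, L > 0$ with $\mu \leq L$, $p \geq 1$ an integer, and $\nu \in \mathbb{R}$ with $0 < |\nu|$. Then $\max\{ |\sqrt[p]{|\nu|\mu} - 1|, |\sqrt[p]{|\nu| L} - 1| \} \geq \frac{\sqrt[p]{L/\mu} - 1}{\sqrt[p]{L/\mu} + 1}$, with equality when $|\nu| = \left(\frac{2}{\sqrt[p]{L} + \sqrt[p]{\mu}}\right)^p$. -/
/-- Optimisation over scalar inversion matrices: for `0 < μ ≤ L`, `p ≥ 1`, `ν ≠ 0`,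
`max { |(|ν|μ)^(1/p) - 1|, |(|ν|L)^(1/p) - 1| } ≥ ((L/μ)^(1/p) - 1)/((L/μ)^(1/p) + 1)`,
with equality when `|ν| = (2/(L^(1/p) + μ^(1/p)))^p`. -/
theorem stmt_15 (μ L : ℝ) (hμ : 0 < μ) (hμL : μ ≤ L) (p : ℕ) (hp : 1 ≤ p)
    (ν : ℝ) (hν : ν ≠ 0) :
    ((L / μ) ^ (1 / (p : ℝ)) - 1) / ((L / μ) ^ (1 / (p : ℝ)) + 1) ≤
      max |(|ν| * μ) ^ (1 / (p : ℝ)) - 1| |(|ν| * L) ^ (1 / (p : ℝ)) - 1| ∧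
    (|ν| = (2 / (L ^ (1 / (p : ℝ)) + μ ^ (1 / (p : ℝ)))) ^ p →
      max |(|ν| * μ) ^ (1 / (p : ℝ)) - 1| |(|ν| * L) ^ (1 / (p : ℝ)) - 1| =
        ((L / μ) ^ (1 / (p : ℝ)) - 1) / ((L / μ) ^ (1 / (p : ℝ)) + 1)) := by
  have hL : 0 < L := lt_of_lt_of_le hμ hμL
  set a : ℝ := μ ^ (1 / (p : ℝ)) with ha_def
  set b : ℝ := L ^ (1 / (p : ℝ)) with hb_def
  set t : ℝ := |ν| ^ (1 / (p : ℝ)) with ht_def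
  have ha : 0 < a := Real.rpow_pos_of_pos hμ _
  have hb : 0 < b := Real.rpow_pos_of_pos hL _
  have ht : 0 < t := Real.rpow_pos_of_pos (abs_pos.2 hν) _
  have hab : a ≤ b := Real.rpow_le_rpow hμ.le hμL (by positivity)
  have hba : 0 < b + a := by linarith
  have hμν : (|ν| * μ) ^ (1 / (p : ℝ)) = t * a := Real.mul_rpow (abs_nonneg _) hμ.le
  have hLν : (|ν| * L) ^ (1 / (p : ℝ)) = t * b := Real.mul_rpow (abs_nonneg _) hL.le
  have hdiv : (L / μ) ^ (1 / (p : ℝ)) = b / a := Real.div_rpow hL.le hμ.le _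
  have hr : ((L / μ) ^ (1 / (p : ℝ)) - 1) / ((L / μ) ^ (1 / (p : ℝ)) + 1)
      = (b - a) / (b + a) := by
    rw [hdiv]
    rw [div_sub_one ha.ne', div_add_one ha.ne']
    rw [div_div_div_eq, mul_comm a (b + a)]
    exact mul_div_mul_right _ _ ha.ne'
  set r : ℝ := (b - a) / (b + a) with hrdef
  have hrmul : r * (b + a) = b - a := div_mul_cancel₀ _ hba.ne'
  have hr0 : 0 ≤ r := div_nonneg (by linarith) hba.le
  rw [hμν, hLν, hr]
  constructor
  · rcases le_or_gt (1 + r) (t * b) with h | h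
    · refine le_trans ?_ (le_max_right _ _)
      calc r ≤ t * b - 1 := by linarith
        _ ≤ |t * b - 1| := le_abs_self _
    · refine le_trans ?_ (le_max_left _ _)
      have key : r ≤ 1 - t * a := by
        have h2 : t * b * (b + a) < (1 + r) * (b + a) :=
          mul_lt_mul_of_pos_right h hba
      -- (1+r)(b+a) = (b+a) + (b-a) = 2b, so t*(b+a) < 2, so t*a*(b+a) ≤ 2a - ...
        have h3 : t * (b + a) < 2 := by
          have : t * b * (b + a) < 2 * b := by nlinarith
          nlinarith [mul_pos ht ha]
        have h4 : t * a * (b + a) < 2 * a := by nlinarith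
        nlinarith
      calc r ≤ 1 - t * a := key
        _ = -(t * a - 1) := by ring
        _ ≤ |t * a - 1| := neg_le_abs _
  · intro hνeq
    have hp0 : p ≠ 0 := by omega
    have htval : t = 2 / (b + a) := by
      rw [ht_def, hνeq]
      have h2 : (0:ℝ) ≤ 2 / (L ^ (1 / (p : ℝ)) + μ ^ (1 / (p : ℝ))) := by
        rw [← hb_def, ← ha_def]; positivity
      rw [one_div, Real.pow_rpow_inv_natCast h2 hp0, ← hb_def, ← ha_def]
    have h1 : t * a - 1 = -r := by
      rw [htval, hrdef]
      field_simp
      ring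
    have h2 : t * b - 1 = r := by
      rw [htval, hrdef]
      field_simp
      ring
    rw [h1, h2, abs_neg, abs_of_nonneg hr0, max_self]
end
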